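/- arXiv:1007.4791 — 4 statements merged into one kernel-verified Lean document; each statement's English description precedes it below -/
import Mathlib

section
/- There exists an absolute constant C > 0 with the following property. Assume λ ≥ (28σ/√n)(√(ln((n+1)^{d+1})) + 4) and let f̂ be a Lasso estimator over the Heaviside dictionary, i.e. a measurable selection with f̂(ω) a minimizer over h ∈ L1(D) of ‖Y(ω) − h‖² + λ‖h‖_{L1(D)} (assumed to exist for every ω). Then E[ ‖f − f̂‖² + λ‖f̂‖_{L1(D)} ] ≤ C [ inf_{h ∈ L1(D)} ( ‖f − h‖² + λ‖h‖_{L1(D)} ) + λ σ/√n ]. -/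
/-!
Off the event that some Heaviside unit has empirical correlation larger than `τ = nλ/(4σ)` with
the noise, duality between `L1(D)` and the supremum over `D` turns the basic inequality of the
Lasso into an oracle inequality with constant `3`. On the design the units realise at most
`(n+1)^(d+1)` sign patterns (Radon's theorem bounds the VC dimension of halfspaces by `d + 1`,
then Sauer–Shelah), so a union of Gaussian tail bounds makes this bad event have probability at
most `1/(96 n²)` for the stated `λ`. On the bad event a crude bound costs `σ²` times the empirical
second moment of the noise, which by the fourth moment of the Gaussian contributes at most
`λσ/√n` in expectation.
-/

open MeasureTheory ProbabilityTheory Real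

noncomputable section

def heaviside {d : ℕ} (a : Fin d → ℝ) (b : ℝ) (x : Fin d → ℝ) : ℝ :=
  if 0 < (∑ i, a i * x i) + b then 1 else 0

def memL1D {d : ℕ} (h : (Fin d → ℝ) → ℝ) : Prop :=
  ∃ θ : ((Fin d → ℝ) × ℝ) → ℝ, Summable (fun ab => |θ ab|) ∧
    ∀ x, h x = ∑' ab : (Fin d → ℝ) × ℝ, θ ab * heaviside ab.1 ab.2 x

def l1normD {d : ℕ} (h : (Fin d → ℝ) → ℝ) : ℝ :=
  sInf {s : ℝ | ∃ θ : ((Fin d → ℝ) × ℝ) → ℝ, Summable (fun ab => |θ ab|) ∧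
    (∀ x, h x = ∑' ab : ((Fin d → ℝ) × ℝ), θ ab * heaviside ab.1 ab.2 x) ∧
    s = ∑' ab : ((Fin d → ℝ) × ℝ), |θ ab|}

namespace Real

lemma pow_four_le_exp_add_exp (y : ℝ) : y ^ 4 ≤ 24 * (exp y + exp (-y)) := by
  have key : ∀ z, 0 ≤ z → z ^ 4 ≤ 24 * exp z := fun z hz => by
    have h := pow_div_factorial_le_exp z hz 4
    rw [show (Nat.factorial 4 : ℝ) = 24 by norm_num [Nat.factorial], div_le_iff₀ (by norm_num)] at h
    linarith
  rcases le_total 0 y with hy | hy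
  · linarith [key y hy, exp_pos (-y)]
  · have := key (-y) (by linarith)
    rw [Even.neg_pow (by decide)] at this
    linarith [exp_pos y]

end Real

namespace ProbabilityTheory

variable {Ω : Type*} [MeasurableSpace Ω] {P : Measure Ω} {X : Ω → ℝ}

lemma hasSubgaussianMGF_of_map_eq_gaussianReal {v : NNReal} (hX : P.map X = gaussianReal 0 v) :
    HasSubgaussianMGF X v P := by
  refine (HasSubgaussianMGF.id_map_iff
    (aemeasurable_of_map_neZero (by rw [hX]; infer_instance))).mp (hX ▸ ?_)
  exact ⟨integrable_exp_mul_gaussianReal, fun t => by simp [mgf_id_gaussianReal]⟩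

lemma HasSubgaussianMGF.mono {c c' : NNReal} (h : HasSubgaussianMGF X c P) (hc : c ≤ c') :
    HasSubgaussianMGF X c' P where
  integrable_exp_mul := h.integrable_exp_mul
  mgf_le t := (h.mgf_le t).trans (exp_le_exp.mpr (by gcongr))

lemma HasSubgaussianMGF.measureReal_abs_ge_le {c : NNReal}
    (h : HasSubgaussianMGF X c P) {ε : ℝ} (hε : 0 ≤ ε) :
    P.real {ω | ε ≤ |X ω|} ≤ 2 * exp (-ε ^ 2 / (2 * c)) := by
  have hsplit : {ω | ε ≤ |X ω|} = {ω | ε ≤ X ω} ∪ {ω | ε ≤ (-X) ω} := by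
    ext ω; simp [le_abs', or_comm, le_neg]
  calc P.real {ω | ε ≤ |X ω|} ≤ P.real {ω | ε ≤ X ω} + P.real {ω | ε ≤ (-X) ω} :=
        hsplit ▸ measureReal_union_le _ _
    _ ≤ 2 * exp (-ε ^ 2 / (2 * c)) := by
        linarith [h.measure_ge_le hε, h.neg.measure_ge_le hε]

lemma integrable_pow_of_map_eq_gaussianReal {v : NNReal} (hX : P.map X = gaussianReal 0 v)
    (k : ℕ) : Integrable (fun ω => X ω ^ k) P :=
  have h := hasSubgaussianMGF_of_map_eq_gaussianReal hX
  integrable_pow_of_integrable_exp_mul one_ne_zero (h.integrable_exp_mul 1)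
    (h.integrable_exp_mul (-1)) k

lemma integral_pow_four_le_of_map_eq_gaussianReal
    (hX : P.map X = gaussianReal 0 1) : ∫ ω, X ω ^ 4 ∂P ≤ 96 := by
  have hsub := hasSubgaussianMGF_of_map_eq_gaussianReal hX
  have hmgf : ∀ t, ∫ ω, exp (t * X ω) ∂P = exp (t ^ 2 / 2) := fun t => by
    simpa [mgf] using mgf_gaussianReal hX t
  have hexp_half : exp (1 / 2 : ℝ) ≤ 2 := by
    have h := exp_one_lt_d9
    have : exp (1 / 2 : ℝ) ^ 2 = exp 1 := by rw [← exp_nat_mul]; norm_num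
    nlinarith [exp_pos (1 / 2 : ℝ)]
  calc ∫ ω, X ω ^ 4 ∂P ≤ ∫ ω, 24 * (exp (1 * X ω) + exp (-1 * X ω)) ∂P := by
        refine integral_mono ?_ ?_ fun ω => by simpa using Real.pow_four_le_exp_add_exp (X ω)
        · exact integrable_pow_of_map_eq_gaussianReal hX 4
        · exact ((hsub.integrable_exp_mul 1).add (hsub.integrable_exp_mul (-1))).const_mul 24
    _ = 48 * exp (1 / 2) := by
        rw [integral_const_mul, integral_add (hsub.integrable_exp_mul 1)
          (hsub.integrable_exp_mul (-1)), hmgf, hmgf, one_pow, neg_one_sq]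
        ring
    _ ≤ 96 := by linarith

lemma setIntegral_sq_le_of_map_eq_gaussianReal [IsFiniteMeasure P]
    (hX : P.map X = gaussianReal 0 1) (B : Set Ω) {K : ℝ} (hK : 0 < K) :
    ∫ ω in B, X ω ^ 2 ∂P ≤ 48 / K + K / 2 * P.real B := by
  have hX4 := integrable_pow_of_map_eq_gaussianReal hX 4
  have hyoung : ∀ ω, X ω ^ 2 ≤ X ω ^ 4 / (2 * K) + K / 2 := fun ω => by
    rw [div_add_div _ _ (by positivity) (by positivity), le_div_iff₀ (by positivity)]
    nlinarith [sq_nonneg (X ω ^ 2 - K)]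
  calc ∫ ω in B, X ω ^ 2 ∂P ≤ ∫ ω in B, (X ω ^ 4 / (2 * K) + K / 2) ∂P :=
        integral_mono_of_nonneg (.of_forall fun ω => by positivity)
          ((hX4.div_const _).fun_add (integrable_const _)).integrableOn (.of_forall hyoung)
    _ = (∫ ω in B, X ω ^ 4 ∂P) / (2 * K) + K / 2 * P.real B := by
        rw [integral_add (hX4.div_const _).integrableOn (integrable_const _), integral_div,
          setIntegral_const, smul_eq_mul]
        ring
    _ ≤ 96 / (2 * K) + K / 2 * P.real B := by
        gcongr
        exact (setIntegral_le_integral hX4 (.of_forall fun ω => by positivity)).trans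
          (integral_pow_four_le_of_map_eq_gaussianReal hX)
    _ = 48 / K + K / 2 * P.real B := by ring

end ProbabilityTheory

namespace HeavisideLasso

section Dictionary

variable {d n : ℕ}

lemma abs_heaviside_le_one (a : Fin d → ℝ) (b : ℝ) (y : Fin d → ℝ) : |heaviside a b y| ≤ 1 := by
  unfold heaviside; split_ifs <;> simp

lemma l1normD_nonneg (h : (Fin d → ℝ) → ℝ) : 0 ≤ l1normD h :=
  Real.sInf_nonneg fun _ ⟨_, _, _, hs⟩ => hs ▸ tsum_nonneg fun _ => abs_nonneg _

lemma memL1D_zero : memL1D (fun _ : Fin d → ℝ => (0 : ℝ)) :=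
  ⟨fun _ => 0, by simp [summable_zero], fun _ => by simp⟩

lemma abs_tsum_mul_le {ι : Type*} {θ w : ι → ℝ} (hθ : Summable fun i => |θ i|) {c : ℝ}
    (hw : ∀ i, |w i| ≤ c) : |∑' i, θ i * w i| ≤ c * ∑' i, |θ i| := by
  have hle : ∀ i, |θ i * w i| ≤ c * |θ i| := fun i => by
    rw [abs_mul, mul_comm c]; exact mul_le_mul_of_nonneg_left (hw i) (abs_nonneg _)
  have hsum : Summable fun i => |θ i * w i| :=
    .of_nonneg_of_le (fun _ => abs_nonneg _) hle (hθ.mul_left c)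
  calc |∑' i, θ i * w i| ≤ ∑' i, |θ i * w i| := by
        simpa only [Real.norm_eq_abs] using norm_tsum_le_tsum_norm (f := fun i => θ i * w i) hsum
    _ ≤ ∑' i, c * |θ i| := hsum.tsum_le_tsum hle (hθ.mul_left c)
    _ = c * ∑' i, |θ i| := tsum_mul_left

theorem abs_sum_mul_le_mul_l1normD (x : Fin n → Fin d → ℝ) (u : Fin n → ℝ) {c : ℝ}
    (hc : ∀ a b, |∑ i, u i * heaviside a b (x i)| ≤ c) {g : (Fin d → ℝ) → ℝ} (hg : memL1D g) :
    |∑ i, u i * g (x i)| ≤ c * l1normD g := by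
  have hc0 : 0 ≤ c := (abs_nonneg _).trans (hc 0 0)
  obtain ⟨θ₀, hθ₀, hrep₀⟩ := hg
  unfold l1normD
  rw [← smul_eq_mul, ← Real.sInf_smul_of_nonneg hc0]
  refine le_csInf ⟨_, Set.smul_mem_smul_set ⟨θ₀, hθ₀, hrep₀, rfl⟩⟩ ?_
  rintro _ ⟨_, ⟨θ, hθ, hrep, rfl⟩, rfl⟩
  have hterm : ∀ i, Summable fun ab : (Fin d → ℝ) × ℝ => θ ab * heaviside ab.1 ab.2 (x i) :=
    fun i => .of_norm_bounded hθ fun ab => by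
      rw [Real.norm_eq_abs, abs_mul]
      exact mul_le_of_le_one_right (abs_nonneg _) (abs_heaviside_le_one _ _ _)
  have hswap : ∑ i, u i * g (x i)
      = ∑' ab : (Fin d → ℝ) × ℝ, θ ab * ∑ i, u i * heaviside ab.1 ab.2 (x i) := by
    simp_rw [hrep, ← tsum_mul_left, Finset.mul_sum]
    rw [← Summable.tsum_finsetSum fun i _ => (hterm i).mul_left (u i)]
    exact tsum_congr fun ab => Finset.sum_congr rfl fun i _ => by ring
  rw [hswap]
  exact abs_tsum_mul_le hθ fun ab => hc ab.1 ab.2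

end Dictionary

section HalfspaceTraces

variable {d n : ℕ}

open Finset in
lemma sum_choose_le_succ_pow (n m : ℕ) : ∑ k ∈ Iic m, n.choose k ≤ (n + 1) ^ m := by
  rw [← Nat.range_succ_eq_Iic, add_pow]
  refine sum_le_sum fun k hk => ?_
  rw [one_pow, mul_one]
  exact (Nat.choose_le_pow n k).trans
    (Nat.le_mul_of_pos_right _ (Nat.choose_pos (Nat.lt_succ_iff.mp (mem_range.mp hk))))

open Classical in
def halfspaceTraces (x : Fin n → Fin d → ℝ) : Finset (Finset (Fin n)) :=
  Finset.univ.filter fun S => ∃ (a : Fin d → ℝ) (b : ℝ), ∀ i, i ∈ S ↔ 0 < ∑ j, a j * x i j + b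

lemma mem_halfspaceTraces {x : Fin n → Fin d → ℝ} {S : Finset (Fin n)} :
    S ∈ halfspaceTraces x ↔ ∃ (a : Fin d → ℝ) (b : ℝ), ∀ i, i ∈ S ↔ 0 < ∑ j, a j * x i j + b := by
  simp [halfspaceTraces]

lemma filter_mem_halfspaceTraces (x : Fin n → Fin d → ℝ) (a : Fin d → ℝ) (b : ℝ) :
    Finset.univ.filter (fun i => 0 < ∑ j, a j * x i j + b) ∈ halfspaceTraces x :=
  mem_halfspaceTraces.mpr ⟨a, b, fun i => by simp⟩

/-- By Radon's theorem `d + 2` points of `ℝ^d` split into two families with intersecting convex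
hulls, which no halfspace can separate. -/
theorem card_le_of_shatters_halfspaceTraces (x : Fin n → Fin d → ℝ) {s : Finset (Fin n)}
    (hs : (halfspaceTraces x).Shatters s) : s.card ≤ d + 1 := by
  by_contra! hcard
  have hdep : ¬ AffineIndependent ℝ fun i : s => x i := by
    intro hind
    have := hind.card_le_finrank_succ.trans
      (Nat.succ_le_succ (Submodule.finrank_le (vectorSpan ℝ (Set.range fun i : s => x i))))
    simp only [Fintype.card_coe, Module.finrank_fin_fun] at this
    omega
  obtain ⟨I, p, hpI, hpIc⟩ := Convex.radon_partition hdep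
  classical
  obtain ⟨u, hu, hsu⟩ := hs (Finset.map_subtype_subset (Finset.univ.filter (· ∈ I)))
  obtain ⟨a, b, hab⟩ := mem_halfspaceTraces.mp hu
  have hmem : ∀ i : s, (i : Fin n) ∈ u ↔ i ∈ I := fun i => by
    have := congrArg ((i : Fin n) ∈ ·) hsu
    simpa using this
  have hlin : IsLinearMap ℝ fun y : Fin d → ℝ => ∑ j, a j * y j :=
    ⟨fun y z => by simp [mul_add, Finset.sum_add_distrib],
      fun c y => by simp [Finset.mul_sum, mul_left_comm]⟩
  have hpos : p ∈ {y | -b < ∑ j, a j * y j} := by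
    refine convexHull_min ?_ (convex_halfSpace_gt hlin (-b)) hpI
    rintro _ ⟨i, hi, rfl⟩
    have := (hab i).mp ((hmem i).mpr hi)
    simp only [Set.mem_ofPred_eq]; linarith
  have hneg : p ∈ {y | ∑ j, a j * y j ≤ -b} := by
    refine convexHull_min ?_ (convex_halfSpace_le hlin (-b)) hpIc
    rintro _ ⟨i, hi, rfl⟩
    have := (hab i).not.mp ((hmem i).not.mpr hi)
    simp only [Set.mem_ofPred_eq]; linarith
  simp only [Set.mem_ofPred_eq] at hpos hneg
  linarith

theorem card_halfspaceTraces_le (x : Fin n → Fin d → ℝ) :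
    (halfspaceTraces x).card ≤ (n + 1) ^ (d + 1) := by
  classical
  calc (halfspaceTraces x).card ≤ (halfspaceTraces x).shatterer.card :=
        Finset.card_le_card_shatterer _
    _ ≤ ∑ k ∈ Finset.Iic (halfspaceTraces x).vcDim, (Fintype.card (Fin n)).choose k :=
        Finset.card_shatterer_le_sum_vcDim
    _ ≤ ∑ k ∈ Finset.Iic (d + 1), n.choose k := by
        rw [Fintype.card_fin]
        refine Finset.sum_le_sum_of_subset (Finset.Iic_subset_Iic.mpr ?_)
        exact Finset.sup_le fun s hs =>
          card_le_of_shatters_halfspaceTraces x (Finset.mem_shatterer.mp hs)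
    _ ≤ (n + 1) ^ (d + 1) := sum_choose_le_succ_pow n (d + 1)

end HalfspaceTraces

section BadEvent

variable {d n : ℕ} {Ω : Type*}

def badEvent (x : Fin n → Fin d → ℝ) (ξ : Fin n → Ω → ℝ) (τ : ℝ) : Set Ω :=
  ⋃ S ∈ halfspaceTraces x, {ω | τ ≤ |∑ i ∈ S, ξ i ω|}

lemma abs_sum_mul_heaviside_le_of_notMem_badEvent {x : Fin n → Fin d → ℝ}
    {ξ : Fin n → Ω → ℝ} {τ : ℝ} {ω : Ω} (hω : ω ∉ badEvent x ξ τ) (a : Fin d → ℝ) (b : ℝ) :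
    |∑ i, ξ i ω * heaviside a b (x i)| ≤ τ := by
  have hsum : ∑ i, ξ i ω * heaviside a b (x i)
      = ∑ i ∈ Finset.univ.filter (fun i => 0 < ∑ j, a j * x i j + b), ξ i ω := by
    rw [Finset.sum_filter]
    exact Finset.sum_congr rfl fun i _ => by unfold heaviside; split_ifs <;> simp
  rw [hsum]
  by_contra! hlt
  exact hω (Set.mem_biUnion (filter_mem_halfspaceTraces x a b) hlt.le)

lemma measurableSet_badEvent [MeasurableSpace Ω] (x : Fin n → Fin d → ℝ) {ξ : Fin n → Ω → ℝ}
    (hξ : ∀ i, Measurable (ξ i)) (τ : ℝ) : MeasurableSet (badEvent x ξ τ) :=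
  Finset.measurableSet_biUnion _ fun S _ =>
    measurableSet_le measurable_const (Finset.measurable_sum S fun i _ => hξ i).abs

lemma measureReal_badEvent_le [MeasurableSpace Ω] {P : Measure Ω} (x : Fin n → Fin d → ℝ)
    {ξ : Fin n → Ω → ℝ} (hmap : ∀ i, P.map (ξ i) = gaussianReal 0 1) (hind : iIndepFun ξ P)
    {τ : ℝ} (hτ : 0 ≤ τ) :
    P.real (badEvent x ξ τ) ≤ (n + 1) ^ (d + 1) * (2 * exp (-τ ^ 2 / (2 * n))) := by
  have htail : ∀ S : Finset (Fin n),
      P.real {ω | τ ≤ |∑ i ∈ S, ξ i ω|} ≤ 2 * exp (-τ ^ 2 / (2 * n)) := fun S => by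
    have hsub := (HasSubgaussianMGF.sum_of_iIndepFun hind (s := S)
      fun i _ => hasSubgaussianMGF_of_map_eq_gaussianReal (hmap i)).mono
      (c' := n) (by simpa using S.card_le_univ)
    simpa using hsub.measureReal_abs_ge_le hτ
  calc P.real (badEvent x ξ τ)
      ≤ ∑ S ∈ halfspaceTraces x, P.real {ω | τ ≤ |∑ i ∈ S, ξ i ω|} :=
        measureReal_biUnion_finset_le _ _
    _ ≤ (halfspaceTraces x).card * (2 * exp (-τ ^ 2 / (2 * n))) := by
        simpa using Finset.sum_le_sum fun S _ => htail S
    _ ≤ (n + 1) ^ (d + 1) * (2 * exp (-τ ^ 2 / (2 * n))) := by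
        gcongr
        exact_mod_cast card_halfspaceTraces_le x

end BadEvent

section BasicInequality

variable {n : ℕ} (F G H e : Fin n → ℝ) {σ lam pG pH : ℝ}

lemma sum_add_smul_sub_sq (K : Fin n → ℝ) :
    ∑ i, (F i + σ * e i - K i) ^ 2
      = ∑ i, (F i - K i) ^ 2 + 2 * σ * ∑ i, e i * F i - 2 * σ * ∑ i, e i * K i
        + σ ^ 2 * ∑ i, e i ^ 2 := by
  simp only [Finset.mul_sum, ← Finset.sum_add_distrib, ← Finset.sum_sub_distrib]
  exact Finset.sum_congr rfl fun i _ => by ring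

lemma risk_le_of_abs_sum_mul_le (hn : 0 < n) (hσ : 0 ≤ σ) (hpG : 0 ≤ pG) (hpH : 0 ≤ pH)
    {τ : ℝ} (hτ : 4 * σ * τ ≤ n * lam)
    (hG : |∑ i, e i * G i| ≤ τ * pG) (hH : |∑ i, e i * H i| ≤ τ * pH)
    (hbasic : (1 / n : ℝ) * ∑ i, (F i + σ * e i - G i) ^ 2 + lam * pG
      ≤ (1 / n : ℝ) * ∑ i, (F i + σ * e i - H i) ^ 2 + lam * pH) :
    (1 / n : ℝ) * ∑ i, (F i - G i) ^ 2 + lam * pG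
      ≤ 3 * ((1 / n : ℝ) * ∑ i, (F i - H i) ^ 2 + lam * pH) := by
  have hn' : (0 : ℝ) < n := by exact_mod_cast hn
  rw [sum_add_smul_sub_sq, sum_add_smul_sub_sq] at hbasic
  have hcross : 2 * σ * (∑ i, e i * G i - ∑ i, e i * H i) ≤ n * lam / 2 * (pG + pH) := by
    have h1 : ∑ i, e i * G i - ∑ i, e i * H i ≤ τ * pG + τ * pH := by
      linarith [le_abs_self (∑ i, e i * G i), neg_abs_le (∑ i, e i * H i)]
    have h2 : 4 * σ * τ * (pG + pH) ≤ n * lam * (pG + pH) := by gcongr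
    nlinarith
  have hG0 : 0 ≤ ∑ i, (F i - G i) ^ 2 := by positivity
  have hH0 : 0 ≤ ∑ i, (F i - H i) ^ 2 := by positivity
  field_simp at hbasic ⊢
  nlinarith

lemma risk_le_add_sum_sq (hlam : 0 ≤ lam) (hpG : 0 ≤ pG) (hpH : 0 ≤ pH)
    (hbasic : (1 / n : ℝ) * ∑ i, (F i + σ * e i - G i) ^ 2 + lam * pG
      ≤ (1 / n : ℝ) * ∑ i, (F i + σ * e i - H i) ^ 2 + lam * pH) :
    (1 / n : ℝ) * ∑ i, (F i - G i) ^ 2 + lam * pG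
      ≤ 4 * ((1 / n : ℝ) * ∑ i, (F i - H i) ^ 2 + lam * pH)
        + 6 * σ ^ 2 * ((1 / n : ℝ) * ∑ i, e i ^ 2) := by
  have hG : ∑ i, (F i - G i) ^ 2
      ≤ 2 * ∑ i, (F i + σ * e i - G i) ^ 2 + 2 * σ ^ 2 * ∑ i, e i ^ 2 := by
    simp only [Finset.mul_sum, ← Finset.sum_add_distrib]
    refine Finset.sum_le_sum fun i _ => ?_
    nlinarith [add_sq_le (a := F i + σ * e i - G i) (b := -(σ * e i))]
  have hH : ∑ i, (F i + σ * e i - H i) ^ 2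
      ≤ 2 * ∑ i, (F i - H i) ^ 2 + 2 * σ ^ 2 * ∑ i, e i ^ 2 := by
    simp only [Finset.mul_sum, ← Finset.sum_add_distrib]
    refine Finset.sum_le_sum fun i _ => ?_
    nlinarith [add_sq_le (a := F i - H i) (b := σ * e i)]
  have hn : (0 : ℝ) ≤ 1 / n := by positivity
  have := mul_le_mul_of_nonneg_left hG hn
  have := mul_le_mul_of_nonneg_left hH hn
  nlinarith [mul_nonneg hlam hpG, mul_nonneg hlam hpH]

end BasicInequality

section Threshold

variable {d n : ℕ} {σ lam : ℝ}

lemma add_le_sq_div_of_le_lam (hn : 0 < n) (hσ : 0 < σ) {L : ℝ} (hL : 0 ≤ L)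
    (hlam : 28 * σ / √n * (√L + 4) ≤ lam) :
    3 * L + 392 ≤ (n * lam / (4 * σ)) ^ 2 / (2 * n) := by
  have hn' : (0 : ℝ) < n := by exact_mod_cast hn
  have hsq : L + 16 ≤ (√L + 4) ^ 2 := by nlinarith [sq_sqrt hL, sqrt_nonneg L]
  have hroot : 28 * σ * (√L + 4) ≤ √n * lam := by
    rwa [div_mul_eq_mul_div, div_le_iff₀ (sqrt_pos.mpr hn'), mul_comm lam] at hlam
  have hlam2 : 784 * σ ^ 2 * (L + 16) ≤ n * lam ^ 2 := by
    have := pow_le_pow_left₀ (by positivity) hroot 2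
    rw [mul_pow (√(n : ℝ)), sq_sqrt hn'.le] at this
    nlinarith
  rw [div_pow, div_div, le_div_iff₀ (by positivity)]
  nlinarith [mul_le_mul_of_nonneg_left hlam2 hn'.le,
    mul_nonneg (mul_nonneg hn'.le (sq_nonneg σ)) hL]

lemma mul_sq_div_le_of_le_lam (hn : 0 < n) (hσ : 0 < σ) {L : ℝ}
    (hlam : 28 * σ / √n * (√L + 4) ≤ lam) :
    6 * σ ^ 2 * (1 / n) ≤ lam * σ / √n := by
  have hs : 0 ≤ σ / √n := by positivity
  have h112 : 112 * (σ / √n) ≤ lam := by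
    have : 28 * σ / √n * (√L + 4) = 28 * (σ / √n) * √L + 112 * (σ / √n) := by ring
    nlinarith [mul_nonneg (mul_nonneg (by norm_num : (0 : ℝ) ≤ 28) hs) (sqrt_nonneg L)]
  have hsq : σ ^ 2 * (1 / n) = (σ / √n) ^ 2 := by
    rw [div_pow, sq_sqrt (Nat.cast_nonneg n)]; ring
  rw [mul_assoc, hsq, mul_div_assoc]
  nlinarith

variable {Ω : Type*} [MeasurableSpace Ω] {P : Measure Ω} {ξ : Fin n → Ω → ℝ}

lemma measureReal_badEvent_le_of_le_lam (x : Fin n → Fin d → ℝ) (hn : 0 < n) (hσ : 0 < σ)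
    (hmap : ∀ i, P.map (ξ i) = gaussianReal 0 1) (hind : iIndepFun ξ P)
    (hlam : 28 * σ / √n * (√(log ((n + 1 : ℝ) ^ (d + 1))) + 4) ≤ lam) :
    P.real (badEvent x ξ (n * lam / (4 * σ))) ≤ 1 / (96 * n ^ 2) := by
  set N : ℝ := (n + 1 : ℝ) ^ (d + 1)
  have hn' : (0 : ℝ) < n := by exact_mod_cast hn
  have hnN : (n : ℝ) ≤ N := by
    calc (n : ℝ) ≤ n + 1 := by linarith
      _ ≤ N := le_self_pow₀ (by linarith) (by omega)
  have hN : exp (log N) = N := exp_log (by positivity)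
  have hlamn : 0 ≤ lam := (by positivity : 0 ≤ 28 * σ / √n * (√(log N) + 4)).trans hlam
  have hexp : exp (-(n * lam / (4 * σ)) ^ 2 / (2 * n)) ≤ exp (-(3 * log N + 392)) := by
    rw [exp_le_exp, neg_div, neg_le_neg_iff]
    exact add_le_sq_div_of_le_lam hn hσ (log_nonneg (one_le_pow₀ (by linarith))) hlam
  have h392 : 192 ≤ exp 392 := by linarith [add_one_le_exp (392 : ℝ)]
  calc P.real (badEvent x ξ (n * lam / (4 * σ)))
      ≤ N * (2 * exp (-(n * lam / (4 * σ)) ^ 2 / (2 * n))) :=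
        measureReal_badEvent_le x hmap hind (by positivity)
    _ ≤ N * (2 * exp (-(3 * log N + 392))) := by gcongr
    _ = 2 / (N ^ 2 * exp 392) := by
        rw [neg_add, exp_add, exp_neg, exp_neg, show 3 * log N = (3 : ℕ) * log N by norm_num,
          exp_nat_mul, hN]
        field_simp
    _ ≤ 1 / (96 * n ^ 2) := by
        rw [div_le_div_iff₀ (by positivity) (by positivity)]
        nlinarith [pow_le_pow_left₀ hn'.le hnN 2]

end Threshold

section Lasso

variable {d n : ℕ} {Ω : Type*} {ξ : Fin n → Ω → ℝ} {σ lam : ℝ}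

lemma risk_le_add_indicator (x : Fin n → Fin d → ℝ) (f : (Fin d → ℝ) → ℝ) (hn : 0 < n)
    (hσ : 0 < σ) (hlam : 0 ≤ lam) {g h : (Fin d → ℝ) → ℝ} (hg : memL1D g) (hh : memL1D h)
    (ω : Ω) (hbasic : (1 / n : ℝ) * ∑ i, (f (x i) + σ * ξ i ω - g (x i)) ^ 2 + lam * l1normD g
      ≤ (1 / n : ℝ) * ∑ i, (f (x i) + σ * ξ i ω - h (x i)) ^ 2 + lam * l1normD h) :
    (1 / n : ℝ) * ∑ i, (f (x i) - g (x i)) ^ 2 + lam * l1normD g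
      ≤ 4 * ((1 / n : ℝ) * ∑ i, (f (x i) - h (x i)) ^ 2 + lam * l1normD h)
        + 6 * σ ^ 2 * ((1 / n : ℝ) *
          ∑ i, (badEvent x ξ (n * lam / (4 * σ))).indicator (fun ω => ξ i ω ^ 2) ω) := by
  by_cases hω : ω ∈ badEvent x ξ (n * lam / (4 * σ))
  · simp only [Set.indicator_of_mem hω]
    exact risk_le_add_sum_sq _ _ _ _ hlam (l1normD_nonneg g) (l1normD_nonneg h) hbasic
  · simp only [Set.indicator_of_notMem hω, Finset.sum_const_zero, mul_zero, add_zero]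
    have hcorr := abs_sum_mul_heaviside_le_of_notMem_badEvent hω
    have hτ : 4 * σ * (n * lam / (4 * σ)) ≤ n * lam := (mul_div_cancel₀ _ (by positivity)).le
    have hR : 0 ≤ (1 / n : ℝ) * ∑ i, (f (x i) - h (x i)) ^ 2 + lam * l1normD h := by
      have := l1normD_nonneg h; positivity
    refine (risk_le_of_abs_sum_mul_le _ _ _ _ hn hσ.le (l1normD_nonneg g) (l1normD_nonneg h) hτ
      (abs_sum_mul_le_mul_l1normD x _ hcorr hg) (abs_sum_mul_le_mul_l1normD x _ hcorr hh)
      hbasic).trans ?_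
    linarith

variable [MeasurableSpace Ω] {P : Measure Ω} [IsProbabilityMeasure P]

lemma integral_mean_indicator_sq_badEvent_le (x : Fin n → Fin d → ℝ) (hn : 0 < n) (hσ : 0 < σ)
    (hmeas : ∀ i, Measurable (ξ i)) (hmap : ∀ i, P.map (ξ i) = gaussianReal 0 1)
    (hind : iIndepFun ξ P)
    (hlam : 28 * σ / √n * (√(log ((n + 1 : ℝ) ^ (d + 1))) + 4) ≤ lam) :
    ∫ ω, (1 / n : ℝ) * ∑ i, (badEvent x ξ (n * lam / (4 * σ))).indicator (fun ω => ξ i ω ^ 2) ω ∂P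
      ≤ 1 / n := by
  set B := badEvent x ξ (n * lam / (4 * σ))
  have hn' : (0 : ℝ) < n := by exact_mod_cast hn
  have hB := measurableSet_badEvent x hmeas (n * lam / (4 * σ))
  have hPB := measureReal_badEvent_le_of_le_lam x hn hσ hmap hind hlam
  have hcoord : ∀ i, ∫ ω, B.indicator (fun ω => ξ i ω ^ 2) ω ∂P ≤ 1 / n := fun i => by
    rw [integral_indicator hB]
    calc ∫ ω in B, ξ i ω ^ 2 ∂P ≤ 48 / (96 * n) + 96 * n / 2 * P.real B :=
          setIntegral_sq_le_of_map_eq_gaussianReal (hmap i) B (by positivity)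
      _ ≤ 48 / (96 * n) + 96 * n / 2 * (1 / (96 * n ^ 2)) := by gcongr
      _ = 1 / n := by field_simp; ring
  rw [integral_const_mul, integral_finsetSum _ fun i _ =>
    (integrable_pow_of_map_eq_gaussianReal (hmap i) 2).indicator hB]
  calc (1 / n : ℝ) * ∑ i, ∫ ω, B.indicator (fun ω => ξ i ω ^ 2) ω ∂P
      ≤ (1 / n : ℝ) * ∑ _i : Fin n, (1 / n : ℝ) := by gcongr with i; exact hcoord i
    _ = 1 / n := by
        rw [Finset.sum_const, Finset.card_univ, Fintype.card_fin, nsmul_eq_mul]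
        field_simp

lemma integral_le_add_of_le_add_mean_indicator_sq (x : Fin n → Fin d → ℝ) (hn : 0 < n)
    (hσ : 0 < σ) (hmeas : ∀ i, Measurable (ξ i)) (hmap : ∀ i, P.map (ξ i) = gaussianReal 0 1)
    (hind : iIndepFun ξ P)
    (hlam : 28 * σ / √n * (√(log ((n + 1 : ℝ) ^ (d + 1))) + 4) ≤ lam)
    {Z : Ω → ℝ} {A : ℝ} (hZ0 : ∀ ω, 0 ≤ Z ω)
    (hZ : ∀ ω, Z ω ≤ A + 6 * σ ^ 2 * ((1 / n : ℝ) *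
      ∑ i, (badEvent x ξ (n * lam / (4 * σ))).indicator (fun ω => ξ i ω ^ 2) ω)) :
    ∫ ω, Z ω ∂P ≤ A + lam * σ / √n := by
  have hint : Integrable (fun ω => (1 / n : ℝ) *
      ∑ i, (badEvent x ξ (n * lam / (4 * σ))).indicator (fun ω => ξ i ω ^ 2) ω) P :=
    (integrable_finsetSum _ fun i _ => (integrable_pow_of_map_eq_gaussianReal (hmap i) 2).indicator
      (measurableSet_badEvent x hmeas _)).const_mul _
  calc ∫ ω, Z ω ∂P ≤ ∫ ω, (A + 6 * σ ^ 2 * ((1 / n : ℝ) *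
        ∑ i, (badEvent x ξ (n * lam / (4 * σ))).indicator (fun ω => ξ i ω ^ 2) ω)) ∂P :=
        integral_mono_of_nonneg (.of_forall hZ0) ((integrable_const A).add (hint.const_mul _))
          (.of_forall hZ)
    _ ≤ A + 6 * σ ^ 2 * (1 / n) := by
        rw [integral_add (integrable_const A) (hint.const_mul _), integral_const_mul,
          integral_const, probReal_univ, one_smul]
        gcongr
        exact integral_mean_indicator_sq_badEvent_le x hn hσ hmeas hmap hind hlam
    _ ≤ A + lam * σ / √n := by
        grw [mul_sq_div_le_of_le_lam hn hσ hlam]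

end Lasso

end HeavisideLasso

open HeavisideLasso in
/-- ℓ¹-oracle inequality for the Lasso over the (uncountable) Heaviside dictionary. -/
theorem statement_4 :
    ∃ C : ℝ, 0 < C ∧
      ∀ (d n : ℕ), 1 ≤ d → 1 ≤ n →
      ∀ (x : Fin n → Fin d → ℝ) (f : (Fin d → ℝ) → ℝ) (σ : ℝ), 0 < σ →
      ∀ (Ω : Type) [MeasurableSpace Ω] (P : Measure Ω) [IsProbabilityMeasure P]
        (ξ : Fin n → Ω → ℝ),
        (∀ i, Measurable (ξ i)) →
        (∀ i, P.map (ξ i) = gaussianReal 0 1) →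
        iIndepFun ξ P →
      ∀ (lam : ℝ),
        28 * σ / Real.sqrt n * (Real.sqrt (Real.log ((n + 1 : ℝ) ^ (d + 1))) + 4) ≤ lam →
      ∀ (fhat : Ω → (Fin d → ℝ) → ℝ),
        Measurable fhat →
        Measurable (fun ω => l1normD (fhat ω)) →
        (∀ ω, memL1D (fhat ω)) →
        (∀ ω, ∀ h : (Fin d → ℝ) → ℝ, memL1D h →
          (1 / n : ℝ) * ∑ i, (f (x i) + σ * ξ i ω - fhat ω (x i)) ^ 2
              + lam * l1normD (fhat ω) ≤
            (1 / n : ℝ) * ∑ i, (f (x i) + σ * ξ i ω - h (x i)) ^ 2 + lam * l1normD h) →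
        ∫ ω, ((1 / n : ℝ) * ∑ i, (f (x i) - fhat ω (x i)) ^ 2 + lam * l1normD (fhat ω)) ∂P ≤
          C * ((⨅ h : {h : (Fin d → ℝ) → ℝ // memL1D h},
              ((1 / n : ℝ) * ∑ i, (f (x i) - (h : (Fin d → ℝ) → ℝ) (x i)) ^ 2
                + lam * l1normD (h : (Fin d → ℝ) → ℝ)))
            + lam * σ / Real.sqrt n) := by
  refine ⟨4, by norm_num, ?_⟩
  intro d n _ hn x f σ hσ Ω _ P _ ξ hmeas hmap hind lam hlam fhat _ _ hmem hmin
  have hlam0 : 0 ≤ lam := (by positivity : (0 : ℝ) ≤ 28 * σ / √n * _).trans hlam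
  have hrisk : ∀ h : {h : (Fin d → ℝ) → ℝ // memL1D h},
      ∫ ω, ((1 / n : ℝ) * ∑ i, (f (x i) - fhat ω (x i)) ^ 2 + lam * l1normD (fhat ω)) ∂P
        ≤ 4 * ((1 / n : ℝ) * ∑ i, (f (x i) - (h : (Fin d → ℝ) → ℝ) (x i)) ^ 2
          + lam * l1normD (h : (Fin d → ℝ) → ℝ)) + lam * σ / √n := fun ⟨h, hh⟩ =>
    integral_le_add_of_le_add_mean_indicator_sq x hn hσ hmeas hmap hind hlam
      (fun ω => add_nonneg (by positivity) (mul_nonneg hlam0 (l1normD_nonneg _)))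
      (fun ω => risk_le_add_indicator x f hn hσ hlam0 (hmem ω) hh ω (hmin ω h hh))
  have : Nonempty {h : (Fin d → ℝ) → ℝ // memL1D h} := ⟨⟨_, memL1D_zero⟩⟩
  have hE : 0 ≤ lam * σ / √n := by positivity
  rw [mul_add, Real.mul_iInf_of_nonneg (by norm_num), ← sub_le_iff_le_add]
  exact le_ciInf fun h => by linarith [hrisk h]
end
end

section
/- For every f ∈ H and every λ ≥ 0, (1/2) inf_{δ>0} ( K_D(f,δ)² + λ²/(2δ²) ) ≤ L_D(f,λ) ≤ inf_{δ>0} ( K_D(f,δ)² + λ²/(4δ²) ). -/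
/-! Write `a = ‖f - h‖` and `t = ‖h‖_{L1(D)}`. Both bounds compare `a² + λ t` with `(a + δ t)²`
through `λ t ≤ δ² t² + λ² / (4 δ²)`, which is sharp at `δ² = λ / (2 t)`, and
`(a + δ t)² ≤ 2 a² + 2 δ² t²`. The upper bound takes the infimum over `h` for fixed `δ`; the lower
bound takes, for fixed `h`, a nearly optimal `δ`. -/

open MeasureTheory Real

noncomputable section

variable {H : Type*} [NormedAddCommGroup H] [InnerProductSpace ℝ H] {ι : Type*}

/-- Membership in `L1(D)` for a finite or countable dictionary `D = {φ j}`: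
`h = ∑_j θ_j φ_j` with `∑_j |θ_j| < ∞`. -/
def memL1c (φ : ι → H) (h : H) : Prop :=
  ∃ θ : ι → ℝ, Summable (fun j => |θ j|) ∧ HasSum (fun j => θ j • φ j) h

/-- The ℓ¹ norm `‖h‖_{L1(D)}` for a finite or countable dictionary. -/
def l1normc (φ : ι → H) (h : H) : ℝ :=
  sInf {s : ℝ | ∃ θ : ι → ℝ, Summable (fun j => |θ j|) ∧
    HasSum (fun j => θ j • φ j) h ∧ s = ∑' j, |θ j|}

/-- `L_D(f,λ) = inf_{h ∈ L1(D)} (‖f - h‖² + λ‖h‖_{L1(D)})`. -/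
def LD (φ : ι → H) (f : H) (lam : ℝ) : ℝ :=
  ⨅ h : {h : H // memL1c φ h}, (‖f - (h : H)‖ ^ 2 + lam * l1normc φ (h : H))

/-- The K-functional `K_D(f,δ) = inf_{h ∈ L1(D)} (‖f - h‖ + δ‖h‖_{L1(D)})`. -/
def KD (φ : ι → H) (f : H) (δ : ℝ) : ℝ :=
  ⨅ h : {h : H // memL1c φ h}, (‖f - (h : H)‖ + δ * l1normc φ (h : H))

lemma le_sq_ciInf_of_forall_le_sq {α : Type*} [Nonempty α] {g : α → ℝ} (hg : ∀ i, 0 ≤ g i)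
    {c : ℝ} (hc : ∀ i, c ≤ g i ^ 2) : c ≤ (⨅ i, g i) ^ 2 := by
  have hsqrt : √c ≤ ⨅ i, g i := le_ciInf fun i => (Real.sqrt_le_left (hg i)).mpr (hc i)
  calc c ≤ √c ^ 2 := by rw [Real.sq_sqrt']; exact le_max_left c 0
    _ ≤ (⨅ i, g i) ^ 2 := pow_le_pow_left₀ (Real.sqrt_nonneg c) hsqrt 2

lemma mul_le_mul_sq_add_sq_div_four_mul {u : ℝ} (hu : 0 < u) (a t : ℝ) :
    a * t ≤ u * t ^ 2 + a ^ 2 / (4 * u) := by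
  have : a * t - u * t ^ 2 ≤ a ^ 2 / (4 * u) := by
    rw [le_div_iff₀ (by positivity)]
    nlinarith [sq_nonneg (2 * u * t - a)]
  linarith

/- The bound of `mul_le_mul_sq_add_sq_div_four_mul` is attained at `u = a / (2 t)`; perturbing `a` and `t`
by `η` keeps `u` positive when `a` or `t` vanishes. -/
lemma exists_sq_mul_sq_add_sq_div_le {a t ε : ℝ} (ha : 0 ≤ a) (ht : 0 ≤ t) (hε : 0 < ε) :
    ∃ δ : ℝ, 0 < δ ∧ δ ^ 2 * t ^ 2 + a ^ 2 / (4 * δ ^ 2) ≤ a * t + ε := by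
  set η := min 1 (ε / (a + t + 1))
  have hη : 0 < η := lt_min one_pos (by positivity)
  have hηε : η * (a + t + 1) ≤ ε := by
    calc η * (a + t + 1) ≤ ε / (a + t + 1) * (a + t + 1) := by
          gcongr; exact min_le_right _ _
      _ = ε := div_mul_cancel₀ ε (by positivity)
  set u := (a + η) / (2 * (t + η)) with hu_def
  have hu : 0 < u := by positivity
  refine ⟨√u, Real.sqrt_pos.mpr hu, ?_⟩
  rw [Real.sq_sqrt hu.le]
  have hut : u * t ^ 2 ≤ (a + η) * (t + η) / 2 := by
    calc u * t ^ 2 ≤ u * (t + η) ^ 2 := by gcongr; linarith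
      _ = (a + η) * (t + η) / 2 := by rw [hu_def]; field_simp
  have hau : a ^ 2 / (4 * u) ≤ (a + η) * (t + η) / 2 := by
    calc a ^ 2 / (4 * u) ≤ (a + η) ^ 2 / (4 * u) := by gcongr; linarith
      _ = (a + η) * (t + η) / 2 := by rw [hu_def]; field_simp; norm_num
  nlinarith [min_le_left 1 (ε / (a + t + 1))]

section Dictionary

variable (φ : ι → H)

lemma memL1c_zero : memL1c φ (0 : H) :=
  ⟨0, by simp [summable_zero], by simp [hasSum_zero]⟩

instance : Nonempty {h : H // memL1c φ h} := ⟨⟨0, memL1c_zero φ⟩⟩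

lemma l1normc_nonneg (h : H) : 0 ≤ l1normc φ h :=
  Real.sInf_nonneg <| by
    rintro s ⟨θ, -, -, rfl⟩
    exact tsum_nonneg fun j => abs_nonneg _

variable (f : H)

lemma KD_le {δ : ℝ} (hδ : 0 ≤ δ) (h : {h : H // memL1c φ h}) :
    KD φ f δ ≤ ‖f - (h : H)‖ + δ * l1normc φ h :=
  ciInf_le ⟨0, by
    rintro x ⟨h', rfl⟩
    exact add_nonneg (norm_nonneg _) (mul_nonneg hδ (l1normc_nonneg φ _))⟩ h

lemma KD_nonneg {δ : ℝ} (hδ : 0 ≤ δ) : 0 ≤ KD φ f δ :=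
  Real.iInf_nonneg fun _ => add_nonneg (norm_nonneg _) (mul_nonneg hδ (l1normc_nonneg φ _))

lemma LD_le {lam : ℝ} (hlam : 0 ≤ lam) (h : {h : H // memL1c φ h}) :
    LD φ f lam ≤ ‖f - (h : H)‖ ^ 2 + lam * l1normc φ h :=
  ciInf_le ⟨0, by
    rintro x ⟨h', rfl⟩
    exact add_nonneg (sq_nonneg _) (mul_nonneg hlam (l1normc_nonneg φ _))⟩ h

lemma LD_le_KD_sq_add {lam δ : ℝ} (hlam : 0 ≤ lam) (hδ : 0 < δ) :
    LD φ f lam ≤ KD φ f δ ^ 2 + lam ^ 2 / (4 * δ ^ 2) := by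
  suffices LD φ f lam - lam ^ 2 / (4 * δ ^ 2) ≤ KD φ f δ ^ 2 by linarith
  refine le_sq_ciInf_of_forall_le_sq
    (fun _ => add_nonneg (norm_nonneg _) (mul_nonneg hδ.le (l1normc_nonneg φ _))) fun h => ?_
  have ha := norm_nonneg (f - (h : H))
  have ht := l1normc_nonneg φ h
  have hyoung := mul_le_mul_sq_add_sq_div_four_mul (pow_pos hδ 2) lam (l1normc φ h)
  nlinarith [LD_le φ f hlam h, mul_nonneg ha (mul_nonneg hδ.le ht)]

lemma iInf_KD_sq_add_le {lam : ℝ} (hlam : 0 ≤ lam) (h : {h : H // memL1c φ h}) :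
    ⨅ δ : {δ : ℝ // 0 < δ}, (KD φ f δ ^ 2 + lam ^ 2 / (2 * (δ : ℝ) ^ 2)) ≤
      2 * (‖f - (h : H)‖ ^ 2 + lam * l1normc φ h) := by
  set a := ‖f - (h : H)‖
  set t := l1normc φ h
  refine le_of_forall_pos_le_add fun ε hε => ?_
  obtain ⟨δ, hδ, hδε⟩ :=
    exists_sq_mul_sq_add_sq_div_le hlam (l1normc_nonneg φ h) (half_pos hε)
  have hK : KD φ f δ ^ 2 ≤ (a + δ * t) ^ 2 :=
    pow_le_pow_left₀ (KD_nonneg φ f hδ.le) (KD_le φ f hδ.le h) 2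
  have hbdd : BddBelow (Set.range fun δ : {δ : ℝ // 0 < δ} =>
      KD φ f δ ^ 2 + lam ^ 2 / (2 * (δ : ℝ) ^ 2)) :=
    ⟨0, by rintro x ⟨δ, rfl⟩; positivity⟩
  calc _ ≤ KD φ f δ ^ 2 + lam ^ 2 / (2 * δ ^ 2) := ciInf_le hbdd ⟨δ, hδ⟩
    _ ≤ 2 * a ^ 2 + 2 * (δ ^ 2 * t ^ 2 + lam ^ 2 / (4 * δ ^ 2)) := by
      have : lam ^ 2 / (2 * δ ^ 2) = 2 * (lam ^ 2 / (4 * δ ^ 2)) := by field_simp; ring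
      nlinarith [sq_nonneg (a - δ * t)]
    _ ≤ 2 * (a ^ 2 + lam * t) + ε := by linarith

end Dictionary

theorem statement_10_general {H : Type*} [NormedAddCommGroup H] [InnerProductSpace ℝ H]
    {ι : Type*} (φ : ι → H) (f : H) (lam : ℝ) (hlam : 0 ≤ lam) :
    (1 / 2) * (⨅ δ : {δ : ℝ // 0 < δ},
        (KD φ f (δ : ℝ) ^ 2 + lam ^ 2 / (2 * (δ : ℝ) ^ 2))) ≤ LD φ f lam ∧
    LD φ f lam ≤ ⨅ δ : {δ : ℝ // 0 < δ},
        (KD φ f (δ : ℝ) ^ 2 + lam ^ 2 / (4 * (δ : ℝ) ^ 2)) := by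
  refine ⟨?_, le_ciInf fun δ => LD_le_KD_sq_add φ f hlam δ.2⟩
  exact le_ciInf fun h => by linarith [iInf_KD_sq_add_le φ f hlam h]

/-- Equivalence between the deterministic Lasso functional `L_D` and the
K-functional `K_D`. -/
theorem statement_10 {H : Type*} [NormedAddCommGroup H] [InnerProductSpace ℝ H]
    {ι : Type*} [Countable ι] (φ : ι → H) (f : H) (lam : ℝ) (hlam : 0 ≤ lam) :
    (1 / 2) * (⨅ δ : {δ : ℝ // 0 < δ},
        (KD φ f (δ : ℝ) ^ 2 + lam ^ 2 / (2 * (δ : ℝ) ^ 2))) ≤ LD φ f lam ∧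
    LD φ f lam ≤ ⨅ δ : {δ : ℝ // 0 < δ},
        (KD φ f (δ : ℝ) ^ 2 + lam ^ 2 / (4 * (δ : ℝ) ^ 2)) :=
  statement_10_general φ f lam hlam
end
end

section
/- Let 1 < q < 2, r > 0, R > 0 and assume f ∈ B_{q,r}(R). Then there exists C_q > 0 depending only on q such that for every p ∈ ℕ* and every λ_p > 0 (in particular λ_p = 4ε(√(ln p)+1)), inf_{h ∈ L1(D_p)} ( ‖f − h‖² + λ_p‖h‖_{L1(D_p)} ) ≤ C_q max( R^q λ_p^{2−q} , (R p^{−r})^{2q/(2−q)} λ_p^{4(1−q)/(2−q)} ). -/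
open MeasureTheory Real

noncomputable section

/-- Membership in the linear span of the truncated dictionary `{φ 0, …, φ (p-1)}`
(representing `{φ_1, …, φ_p}`). -/
def L1set {H : Type*} [AddCommGroup H] [Module ℝ H] (φ : ℕ → H) (p : ℕ) : Set H :=
  {h | ∃ θ : Fin p → ℝ, h = ∑ j, θ j • φ (j : ℕ)}

/-- The ℓ¹ norm with respect to the truncated dictionary. -/
def l1norm {H : Type*} [AddCommGroup H] [Module ℝ H] (φ : ℕ → H) (p : ℕ) (h : H) : ℝ :=
  sInf {s : ℝ | ∃ θ : Fin p → ℝ, h = ∑ j, θ j • φ (j : ℕ) ∧ s = ∑ j, |θ j|}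

/-- Membership in the space `L_{1,r}`. -/
def memL1r {H : Type*} [NormedAddCommGroup H] [InnerProductSpace ℝ H]
    (φ : ℕ → H) (r : ℝ) (g : H) : Prop :=
  ∃ C : ℝ, 0 < C ∧ ∀ p : ℕ, 1 ≤ p →
    ∃ gp ∈ L1set φ p, l1norm φ p gp ≤ C ∧ ‖g - gp‖ ≤ C * (p : ℝ) ^ (-r)

/-- The norm of the space `L_{1,r}` (the smallest admissible constant `C`). -/
def l1rnorm {H : Type*} [NormedAddCommGroup H] [InnerProductSpace ℝ H]
    (φ : ℕ → H) (r : ℝ) (g : H) : ℝ :=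
  sInf {C : ℝ | 0 < C ∧ ∀ p : ℕ, 1 ≤ p →
    ∃ gp ∈ L1set φ p, l1norm φ p gp ≤ C ∧ ‖g - gp‖ ≤ C * (p : ℝ) ^ (-r)}

/-- Membership in the interpolation space `B_{q,r}(R)`. -/
def memBqr {H : Type*} [NormedAddCommGroup H] [InnerProductSpace ℝ H]
    (φ : ℕ → H) (q r R : ℝ) (g : H) : Prop :=
  ∀ δ : ℝ, 0 < δ →
    (⨅ h : {h : H // memL1r φ r h}, (‖g - (h : H)‖ + δ * l1rnorm φ r (h : H))) ≤
      R * δ ^ (2 * (1 / q - 1 / 2))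

/-
Pick `h ∈ L_{1,r}` nearly optimal in the interpolation inequality at level `δ`, and then an
element `g_p ∈ L1(D_p)` approximating `h` at rate `p^{-r}` with ℓ¹ norm about `‖h‖_{L_{1,r}}`.
Testing the Lasso criterion at `g_p` and using `‖f - h‖ + δ ‖h‖_{L_{1,r}} ≲ R δ^{2α}` bounds it by
`(X (1 + p^{-r}/δ))² + λ X / δ` with `X = R δ^{2α}`; the slack in "nearly optimal" disappears by
continuity. The choice `δ = (λ/R)^{q/2}` then yields the two rates of the theorem.
-/

def lassoValue {H : Type*} [NormedAddCommGroup H] [InnerProductSpace ℝ H]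
    (φ : ℕ → H) (p : ℕ) (lam : ℝ) (f : H) : ℝ :=
  ⨅ h : L1set φ p, (‖f - (h : H)‖ ^ 2 + lam * l1norm φ p (h : H))

lemma le_of_forall_le_of_mem_closure {F : ℝ → ℝ} (hF : Continuous F) {S : Set ℝ} {I x : ℝ}
    (hx : x ∈ closure S) (hS : ∀ c ∈ S, I ≤ F c) : I ≤ F x :=
  (isClosed_le continuous_const hF).closure_subset_iff.2 hS hx

section Lasso

variable {H : Type*} [NormedAddCommGroup H] [InnerProductSpace ℝ H] {φ : ℕ → H} {p : ℕ}
  {lam : ℝ} {f : H}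

lemma l1norm_nonneg (φ : ℕ → H) (p : ℕ) (h : H) : 0 ≤ l1norm φ p h :=
  Real.sInf_nonneg <| by
    rintro s ⟨θ, -, rfl⟩
    positivity

lemma l1norm_zero_nonpos (φ : ℕ → H) (p : ℕ) : l1norm φ p 0 ≤ 0 :=
  csInf_le ⟨0, by rintro s ⟨θ, -, rfl⟩; positivity⟩ ⟨0, by simp, by simp⟩

lemma memL1r_zero (φ : ℕ → H) (r : ℝ) : memL1r φ r 0 := by
  refine ⟨1, one_pos, fun p hp => ⟨0, ⟨0, by simp⟩, (l1norm_zero_nonpos φ p).trans zero_le_one, ?_⟩⟩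
  simpa using Real.rpow_nonneg (Nat.cast_nonneg p) (-r)

lemma l1rnorm_nonneg (φ : ℕ → H) (r : ℝ) (h : H) : 0 ≤ l1rnorm φ r h :=
  Real.sInf_nonneg fun _ hC => hC.1.le

lemma lassoValue_le (hlam : 0 ≤ lam) {g : H} (hg : g ∈ L1set φ p) :
    lassoValue φ p lam f ≤ ‖f - g‖ ^ 2 + lam * l1norm φ p g :=
  ciInf_le (f := fun h : L1set φ p => ‖f - (h : H)‖ ^ 2 + lam * l1norm φ p (h : H))
    ⟨0, by rintro _ ⟨h, rfl⟩; have := l1norm_nonneg φ p h; positivity⟩ ⟨g, hg⟩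

lemma lassoValue_le_of_approx (hlam : 0 ≤ lam) {h g : H} {C Q : ℝ} (hg : g ∈ L1set φ p)
    (hgC : l1norm φ p g ≤ C) (hhg : ‖h - g‖ ≤ C * Q) :
    lassoValue φ p lam f ≤ (‖f - h‖ + C * Q) ^ 2 + lam * C := by
  have hfg : ‖f - g‖ ≤ ‖f - h‖ + C * Q :=
    (norm_sub_le_norm_sub_add_norm_sub f h g).trans (by gcongr)
  calc lassoValue φ p lam f ≤ ‖f - g‖ ^ 2 + lam * l1norm φ p g := lassoValue_le hlam hg
    _ ≤ (‖f - h‖ + C * Q) ^ 2 + lam * C := by gcongr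

lemma lassoValue_le_l1rnorm (hlam : 0 ≤ lam) (hp : 1 ≤ p) {r : ℝ} {h : H}
    (hh : memL1r φ r h) :
    lassoValue φ p lam f ≤
      (‖f - h‖ + l1rnorm φ r h * (p : ℝ) ^ (-r)) ^ 2 + lam * l1rnorm φ r h := by
  obtain ⟨C₀, hC₀⟩ := hh
  refine le_of_forall_le_of_mem_closure
    (F := fun C => (‖f - h‖ + C * (p : ℝ) ^ (-r)) ^ 2 + lam * C) (by fun_prop)
    (csInf_mem_closure ⟨C₀, hC₀⟩ ⟨0, fun _ hC => hC.1.le⟩) fun C hC => ?_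
  obtain ⟨g, hg, hgC, hhg⟩ := hC.2 p hp
  exact lassoValue_le_of_approx hlam hg hgC hhg

lemma lassoValue_le_of_interpolation (hlam : 0 ≤ lam) (hp : 1 ≤ p) {r δ X : ℝ} (hδ : 0 < δ)
    (hfX : (⨅ h : {h : H // memL1r φ r h}, (‖f - (h : H)‖ + δ * l1rnorm φ r (h : H))) ≤ X) :
    lassoValue φ p lam f ≤ (X * (1 + (p : ℝ) ^ (-r) / δ)) ^ 2 + lam / δ * X := by
  set Q := (p : ℝ) ^ (-r)
  set K := ⨅ h : {h : H // memL1r φ r h}, (‖f - (h : H)‖ + δ * l1rnorm φ r (h : H))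
  have hbdd : BddBelow (Set.range fun h : {h : H // memL1r φ r h} =>
      ‖f - (h : H)‖ + δ * l1rnorm φ r (h : H)) :=
    ⟨0, by rintro _ ⟨h, rfl⟩; have := l1rnorm_nonneg φ r (h : H); positivity⟩
  have : Nonempty {h : H // memL1r φ r h} := ⟨⟨0, memL1r_zero φ r⟩⟩
  have hK : 0 ≤ K := le_ciInf fun h => by have := l1rnorm_nonneg φ r (h : H); positivity
  have hvalue_le_K : lassoValue φ p lam f ≤ (K * (1 + Q / δ)) ^ 2 + lam / δ * K := by
    refine le_of_forall_le_of_mem_closure (F := fun s => (s * (1 + Q / δ)) ^ 2 + lam / δ * s)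
      (by fun_prop) (csInf_mem_closure (Set.range_nonempty _) hbdd) ?_
    rintro _ ⟨⟨h, hh⟩, rfl⟩
    have hL := l1rnorm_nonneg φ r h
    have hLs : l1rnorm φ r h ≤ (‖f - h‖ + δ * l1rnorm φ r h) / δ := by
      rw [le_div_iff₀ hδ]; nlinarith [norm_nonneg (f - h)]
    calc lassoValue φ p lam f ≤ (‖f - h‖ + l1rnorm φ r h * Q) ^ 2 + lam * l1rnorm φ r h :=
          lassoValue_le_l1rnorm hlam hp hh
      _ ≤ (‖f - h‖ + δ * l1rnorm φ r h + (‖f - h‖ + δ * l1rnorm φ r h) / δ * Q) ^ 2 +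
            lam * ((‖f - h‖ + δ * l1rnorm φ r h) / δ) := by
          gcongr
          exact le_add_of_nonneg_right (by positivity)
      _ = _ := by ring
  calc lassoValue φ p lam f ≤ (K * (1 + Q / δ)) ^ 2 + lam / δ * K := hvalue_le_K
    _ ≤ (X * (1 + Q / δ)) ^ 2 + lam / δ * X := by gcongr

end Lasso

lemma rpow_mul_rpow_le_max {A B a b : ℝ} (hA : 0 ≤ A) (hB : 0 ≤ B) (ha : 0 ≤ a) (hb : 0 ≤ b)
    (hab : a + b = 1) : A ^ a * B ^ b ≤ max A B :=
  calc A ^ a * B ^ b ≤ a * A + b * B := Real.geom_mean_le_arith_mean2_weighted ha hb hA hB hab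
    _ ≤ a * max A B + b * max A B := by gcongr <;> simp
    _ = max A B := by rw [← add_mul, hab, one_mul]

/- The level `δ = (λ/R)^{q/2}` balances the approximation and penalty terms: both `X²` and
`λ X / δ` equal `R^q λ^{2-q}`, while the dictionary-truncation term `(X Q / δ)²` is a
weighted geometric mean of the two rates. -/
lemma interpolation_rate_le {q R lam Q δ X : ℝ} (hq1 : 1 < q) (hq2 : q < 2) (hR : 0 < R)
    (hlam : 0 < lam) (hQ : 0 < Q) (hδ : δ = (lam / R) ^ (q / 2))
    (hX : X = R * δ ^ (2 * (1 / q - 1 / 2))) :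
    (X * (1 + Q / δ)) ^ 2 + lam / δ * X ≤
      5 * max (R ^ q * lam ^ (2 - q))
        ((R * Q) ^ (2 * q / (2 - q)) * lam ^ (4 * (1 - q) / (2 - q))) := by
  set A := R ^ q * lam ^ (2 - q)
  set B := (R * Q) ^ (2 * q / (2 - q)) * lam ^ (4 * (1 - q) / (2 - q))
  have hq : q ≠ 0 := by positivity
  have h2q : 2 - q ≠ 0 := by linarith
  obtain ⟨hXA, hlamX, hXQ⟩ : X ^ 2 = A ∧ lam / δ * X = A ∧
      (X / δ * Q) ^ 2 = A ^ ((2 * q - 2) / q) * B ^ ((2 - q) / q) := by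
    -- with `R, λ, Q` written as exponentials, each identity is one between exponents
    obtain ⟨a, rfl⟩ : ∃ a, R = exp a := ⟨log R, (exp_log hR).symm⟩
    obtain ⟨l, rfl⟩ : ∃ l, lam = exp l := ⟨log lam, (exp_log hlam).symm⟩
    obtain ⟨s, rfl⟩ : ∃ s, Q = exp s := ⟨log Q, (exp_log hQ).symm⟩
    simp only [hX, hδ, A, B, ← exp_sub, ← exp_mul, ← exp_add, ← exp_nat_mul, exp_eq_exp]
    refine ⟨?_, ?_, ?_⟩ <;> field_simp <;> ring
  have hXQM : (X / δ * Q) ^ 2 ≤ max A B := hXQ ▸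
    rpow_mul_rpow_le_max (by positivity) (by positivity) (div_nonneg (by linarith) (by linarith))
      (div_nonneg (by linarith) (by linarith)) (by field_simp; ring)
  calc (X * (1 + Q / δ)) ^ 2 + lam / δ * X = (X + X / δ * Q) ^ 2 + A := by
        rw [hlamX]; ring
    _ ≤ 2 * X ^ 2 + 2 * (X / δ * Q) ^ 2 + A := by
        nlinarith [sq_nonneg (X - X / δ * Q)]
    _ ≤ 5 * max A B := by
        rw [hXA]; linarith [le_max_left A B]

/-- Rate of convergence of the deterministic Lasso over the truncated dictionaries
for targets in `B_{q,r}(R)`. -/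
theorem statement_11 :
    ∀ q : ℝ, 1 < q → q < 2 →
    ∃ C : ℝ, 0 < C ∧
      ∀ (r R : ℝ), 0 < r → 0 < R →
      ∀ (H : Type) [NormedAddCommGroup H] [InnerProductSpace ℝ H]
        (φ : ℕ → H) (f : H), memBqr φ q r R f →
      ∀ (p : ℕ), 1 ≤ p →
      ∀ (lam : ℝ), 0 < lam →
        (⨅ h : L1set φ p, (‖f - (h : H)‖ ^ 2 + lam * l1norm φ p (h : H))) ≤
          C * max (R ^ q * lam ^ (2 - q))
            ((R * (p : ℝ) ^ (-r)) ^ (2 * q / (2 - q)) * lam ^ (4 * (1 - q) / (2 - q))) := by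
  intro q hq1 hq2
  refine ⟨5, by norm_num, fun r R _ hR H _ _ φ f hf p hp lam hlam => ?_⟩
  have hδ : 0 < (lam / R) ^ (q / 2) := by positivity
  calc lassoValue φ p lam f ≤ _ := lassoValue_le_of_interpolation hlam.le hp hδ (hf _ hδ)
    _ ≤ _ := interpolation_rate_le hq1 hq2 hR hlam (by positivity) rfl rfl
end
end

section
/- For every t > 0, the t-packing number of the Heaviside dictionary D with respect to the empirical norm satisfies N(t, D, ‖·‖) ≤ (n+1)^{d+1} (4+t)/t; that is, if g_1,…,g_m ∈ D satisfy ‖g_i − g_j‖ ≥ t for all 1 ≤ i < j ≤ m, then m ≤ (n+1)^{d+1} (4+t)/t. -/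
open MeasureTheory Real

noncomputable section

/-- The empirical norm associated with the design points `x_1, …, x_n`. -/
def enorm2 {d n : ℕ} (x : Fin n → Fin d → ℝ) (h : (Fin d → ℝ) → ℝ) : ℝ :=
  Real.sqrt ((1 / n : ℝ) * ∑ i, (h (x i)) ^ 2)

lemma Iic_eq_range_succ (D : ℕ) : Finset.Iic D = Finset.range (D + 1) :=
  Finset.ext fun k => by simp [Nat.lt_succ_iff]

lemma sum_choose_le_aux (n D : ℕ) : ∑ k ∈ Finset.Iic D, n.choose k ≤ (n + 1) ^ D := by
  rw [Iic_eq_range_succ]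
  induction D with
  | zero => simp
  | succ D ih =>
    rw [Finset.sum_range_succ]
    have h1 : n.choose (D + 1) ≤ n * (n + 1) ^ D :=
      calc n.choose (D + 1) ≤ n ^ (D + 1) := Nat.choose_le_pow _ _
        _ = n * n ^ D := by ring
        _ ≤ n * (n + 1) ^ D := Nat.mul_le_mul_left _ (Nat.pow_le_pow_left (by omega) _)
    calc ∑ k ∈ Finset.range (D + 1), n.choose k + n.choose (D + 1)
        ≤ (n + 1) ^ D + n * (n + 1) ^ D := Nat.add_le_add ih h1
      _ = (n + 1) ^ (D + 1) := by ring

/-- Packing bound for the Heaviside dictionary with respect to the empirical norm: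
any `t`-separated family in `D` has at most `(n+1)^{d+1} (4+t)/t` elements. -/
theorem statement_13 (d n : ℕ) (hd : 1 ≤ d) (hn : 1 ≤ n)
    (x : Fin n → Fin d → ℝ) (t : ℝ) (ht : 0 < t)
    (m : ℕ) (g : Fin m → (Fin d → ℝ) → ℝ)
    (hg : ∀ i, ∃ (a : Fin d → ℝ) (b : ℝ), g i = heaviside a b)
    (hsep : ∀ i j : Fin m, i ≠ j → t ≤ enorm2 x (g i - g j)) :
    (m : ℝ) ≤ (n + 1 : ℝ) ^ (d + 1) * ((4 + t) / t) := by
  classical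
  have hval : ∀ i k, g i (x k) = 0 ∨ g i (x k) = 1 := by
    intro i k
    obtain ⟨a, b, hab⟩ := hg i
    rw [hab]
    unfold heaviside
    split <;> simp
  set P : Fin m → Finset (Fin n) := fun i => Finset.univ.filter (fun k => g i (x k) = 1) with hP
  have hmemP : ∀ i k, k ∈ P i ↔ g i (x k) = 1 := by
    intro i k; simp [hP]
  have hinj : Function.Injective P := by
    intro i j hij
    by_contra hne
    have heq : ∀ k, g i (x k) = g j (x k) := by
      intro k
      have h1 : g i (x k) = 1 ↔ g j (x k) = 1 := by
        rw [← hmemP, ← hmemP, hij]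
      rcases hval i k with h2 | h2 <;> rcases hval j k with h3 | h3 <;>
        simp [h2, h3] at h1 ⊢ <;> norm_num at h1 ⊢
    have hzero : enorm2 x (g i - g j) = 0 := by
      unfold enorm2
      have hz : ∀ k, ((g i - g j) (x k)) ^ 2 = 0 := by
        intro k; simp [Pi.sub_apply, heq k]
      rw [Finset.sum_congr rfl (fun k _ => hz k)]
      simp
    have := hsep i j hne
    rw [hzero] at this
    linarith
  set 𝒜 : Finset (Finset (Fin n)) := Finset.univ.image P with h𝒜
  have hcard : 𝒜.card = m := by
    rw [h𝒜, Finset.card_image_of_injective _ hinj, Finset.card_univ, Fintype.card_fin]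
  have hvc : 𝒜.vcDim ≤ d + 1 := by
    apply Finset.sup_le
    intro s hs
    rw [Finset.mem_shatterer] at hs
    by_contra hcard_s
    push_neg at hcard_s
    set f : {k // k ∈ s} → (Fin d → ℝ) := fun k => x k.1 with hf
    have hnotai : ¬ AffineIndependent ℝ f := by
      intro hai
      have h1 := hai.card_le_finrank_succ
      have h2 : Module.finrank ℝ (vectorSpan ℝ (Set.range f)) ≤ d := by
        have h3 := Submodule.finrank_le (vectorSpan ℝ (Set.range f))
        rwa [Module.finrank_fin_fun] at h3
      have h3 : Fintype.card {k // k ∈ s} = s.card := Fintype.card_coe s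
      omega
    obtain ⟨I, p, hpI, hpIc⟩ := Convex.radon_partition hnotai
    set t0 : Finset (Fin n) := s.filter
      (fun k => ∃ h : k ∈ s, (⟨k, h⟩ : {k // k ∈ s}) ∈ I) with ht0
    have ht0s : t0 ⊆ s := by
      intro k hk
      rw [ht0, Finset.mem_filter] at hk
      exact hk.1
    obtain ⟨A, hA𝒜, hsA⟩ := hs ht0s
    rw [h𝒜, Finset.mem_image] at hA𝒜
    obtain ⟨i, -, rfl⟩ := hA𝒜
    obtain ⟨a, b, hgi⟩ := hg i
    set L : (Fin d → ℝ) → ℝ := fun y => ∑ ii, a ii * y ii with hLdef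
    have hL : IsLinearMap ℝ L := by
      constructor
      · intro y z
        simp [hLdef, Pi.add_apply, mul_add, Finset.sum_add_distrib]
      · intro c y
        simp only [hLdef, Pi.smul_apply, smul_eq_mul, Finset.mul_sum]
        exact Finset.sum_congr rfl fun ii _ => by ring
    have hmem_t0 : ∀ k : {k // k ∈ s}, k.1 ∈ t0 ↔ k ∈ I := by
      intro k
      rw [ht0, Finset.mem_filter]
      constructor
      · rintro ⟨-, h, hk⟩
        convert hk using 1
      · intro hk
        exact ⟨k.2, k.2, hk⟩
    have hval_i : ∀ k : {k // k ∈ s}, g i (x k.1) = 1 ↔ -b < L (f k) := by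
      intro k
      rw [hgi]
      unfold heaviside
      have hLk : L (f k) = ∑ ii, a ii * x k.1 ii := rfl
      constructor
      · intro h
        by_contra hcon
        push_neg at hcon
        rw [hLk] at hcon
        rw [if_neg (by linarith)] at h
        norm_num at h
      · intro h
        rw [hLk] at h
        rw [if_pos (by linarith)]
    have hpos : ∀ k : {k // k ∈ s}, k ∈ I → -b < L (f k) := by
      intro k hk
      rw [← hval_i]
      have hkt0 : k.1 ∈ t0 := (hmem_t0 k).2 hk
      rw [← hsA, Finset.mem_inter] at hkt0
      exact (hmemP i k.1).1 hkt0.2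
    have hneg : ∀ k : {k // k ∈ s}, k ∈ (Iᶜ : Set _) → L (f k) ≤ -b := by
      intro k hk
      by_contra hcon
      push_neg at hcon
      have h1 : g i (x k.1) = 1 := (hval_i k).2 hcon
      have h2 : k.1 ∈ t0 := by
        rw [← hsA, Finset.mem_inter]
        exact ⟨k.2, (hmemP i k.1).2 h1⟩
      exact hk ((hmem_t0 k).1 h2)
    have hub : p ∈ {y : Fin d → ℝ | -b < L y} := by
      refine convexHull_min ?_ (convex_halfSpace_gt hL (-b)) hpI
      rintro y ⟨k, hk, rfl⟩
      exact hpos k hk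
    have hlb : p ∈ {y : Fin d → ℝ | L y ≤ -b} := by
      refine convexHull_min ?_ (convex_halfSpace_le hL (-b)) hpIc
      rintro y ⟨k, hk, rfl⟩
      exact hneg k hk
    simp only [Set.mem_setOf_eq] at hub hlb
    linarith
  have hm : m ≤ (n + 1) ^ (d + 1) := by
    calc m = 𝒜.card := hcard.symm
      _ ≤ 𝒜.shatterer.card := Finset.card_le_card_shatterer _
      _ ≤ ∑ k ∈ Finset.Iic 𝒜.vcDim, (Fintype.card (Fin n)).choose k :=
          Finset.card_shatterer_le_sum_vcDim
      _ ≤ ∑ k ∈ Finset.Iic (d + 1), n.choose k := by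
          rw [Fintype.card_fin]
          exact Finset.sum_le_sum_of_subset (Finset.Iic_subset_Iic.2 hvc)
      _ ≤ (n + 1) ^ (d + 1) := sum_choose_le_aux n (d + 1)
  have h1 : (1 : ℝ) ≤ (4 + t) / t := by
    rw [le_div_iff₀ ht]; linarith
  calc (m : ℝ) ≤ (((n + 1) ^ (d + 1) : ℕ) : ℝ) := by exact_mod_cast hm
    _ = (n + 1 : ℝ) ^ (d + 1) := by push_cast; ring
    _ ≤ (n + 1 : ℝ) ^ (d + 1) * ((4 + t) / t) :=
        le_mul_of_one_le_right (by positivity) h1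
end
end
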